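/- Let f ∈ L²((0,1)ⁿ) and h ∈ L²((0,1)ᵐ) be non-constant, and define g(x,ξ) = f(x)·h(ξ). Then S^g_{T,x_i} ≥ (1 − f₀²/∫f² dx) · S^f_{T,x_i}, where f₀ = ∫f dx. In particular this lower bound is independent of h. -/

import Mathlib

open MeasureTheory

noncomputable section SobolDefs

/-- Uniform probability measure on the open unit cube `(0,1)^n`. -/
def uCube (n : ℕ) : Measure (Fin n → ℝ) :=
  Measure.pi fun _ => volume.restrict (Set.Ioo 0 1)

/-- Mean value of `f`. -/
def mval {α : Type*} [MeasurableSpace α] (μ : Measure α) (f : α → ℝ) : ℝ := ∫ x, f x ∂μ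

/-- Integral of the square of `f`. -/
def intSq {α : Type*} [MeasurableSpace α] (μ : Measure α) (f : α → ℝ) : ℝ := ∫ x, (f x) ^ 2 ∂μ

/-- Variance of `f`. -/
def var' {α : Type*} [MeasurableSpace α] (μ : Measure α) (f : α → ℝ) : ℝ := intSq μ f - (mval μ f) ^ 2

/-- Covariance of `f` and `h`. -/
def cov' {α : Type*} [MeasurableSpace α] (μ : Measure α) (f h : α → ℝ) : ℝ :=
  (∫ x, f x * h x ∂μ) - mval μ f * mval μ h

/-- Conditional mean of `f` obtained by integrating out the coordinate encoded
by the update map `upd` over `(0,1)`. -/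
def cMean {α : Type*} [MeasurableSpace α] (upd : α → ℝ → α) (f : α → ℝ) (x : α) : ℝ :=
  ∫ t in Set.Ioo (0 : ℝ) 1, f (upd x t)

/-- Total-effect variance of the coordinate encoded by `upd`. -/
def tVar {α : Type*} [MeasurableSpace α] (μ : Measure α) (upd : α → ℝ → α) (f : α → ℝ) : ℝ :=
  intSq μ f - ∫ x, (cMean upd f x) ^ 2 ∂μ

/-- Total Sobol sensitivity index of the coordinate encoded by `upd`. -/
def sobolT {α : Type*} [MeasurableSpace α] (μ : Measure α) (upd : α → ℝ → α) (f : α → ℝ) : ℝ :=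
  tVar μ upd f / var' μ f

/-- Updating the `i`-th coordinate of a point of the cube. -/
def updC {n : ℕ} (i : Fin n) : (Fin n → ℝ) → ℝ → (Fin n → ℝ) :=
  fun x t => Function.update x i t

/-- Updating the `i`-th coordinate of the first component of a product point. -/
def updF {n : ℕ} {β : Type*} (i : Fin n) : ((Fin n → ℝ) × β) → ℝ → ((Fin n → ℝ) × β) :=
  fun p t => (Function.update p.1 i t, p.2)

end SobolDefs

/-!
Integrating out `xᵢ` from `g(x, ξ) = f(x) h(ξ)` leaves `h(ξ) · ∫ f dxᵢ`, so the total-effect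
variance is multiplicative: `tVar g = tVar f · ∫h²`. The variance of `g` is
`∫f² ∫h² − f₀² h₀²`, at most `∫g² = ∫f² ∫h²`. Hence
`S^g ≥ tVar f · ∫h² / (∫f² ∫h²) = tVar f / ∫f² = (1 − f₀²/∫f²) · S^f`.
-/

open Set

instance : IsProbabilityMeasure (volume.restrict (Ioo (0 : ℝ) 1)) := ⟨by simp⟩

instance (n : ℕ) : IsProbabilityMeasure (uCube n) := by
  unfold uCube; infer_instance

lemma measurePreserving_update {ι : Type*} [Fintype ι] [DecidableEq ι] {X : ι → Type*}
    [∀ j, MeasurableSpace (X j)] (μ : ∀ j, Measure (X j)) [∀ j, IsProbabilityMeasure (μ j)]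
    (i : ι) :
    MeasurePreserving (fun p : (∀ j, X j) × X i => Function.update p.1 i p.2)
      ((Measure.pi μ).prod (μ i)) (Measure.pi μ) := by
  refine ⟨measurable_update', (Measure.pi_eq fun s hs => ?_).symm⟩
  have hpre : (fun p : (∀ j, X j) × X i => Function.update p.1 i p.2) ⁻¹' univ.pi s
      = univ.pi (Function.update s i univ) ×ˢ s i := by
    ext ⟨x, t⟩
    simp only [mem_preimage, mem_pi, mem_univ, forall_const, mem_prod]
    refine ⟨fun hx => ⟨fun j => ?_, by simpa using hx i⟩, fun ⟨hx, ht⟩ j => ?_⟩ <;>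
      rcases eq_or_ne j i with rfl | hj
    · simp
    · simpa [Function.update_of_ne hj] using hx j
    · simpa using ht
    · simpa [Function.update_of_ne hj] using hx j
  rw [Measure.map_apply measurable_update' (.univ_pi hs), hpre, Measure.prod_prod, Measure.pi_pi,
    ← Finset.mul_prod_erase _ _ (Finset.mem_univ i),
    ← Finset.mul_prod_erase _ _ (Finset.mem_univ i)]
  simp only [Function.update_self, measure_univ, one_mul, mul_comm]
  congr 1
  exact Finset.prod_congr rfl fun j hj => by rw [Function.update_of_ne (Finset.ne_of_mem_erase hj)]

lemma sq_integral_le_integral_sq {Ω : Type*} [MeasurableSpace Ω] {ν : Measure Ω}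
    [IsProbabilityMeasure ν] {g : Ω → ℝ} (hg : MemLp g 2 ν) :
    (∫ x, g x ∂ν) ^ 2 ≤ ∫ x, g x ^ 2 ∂ν := by
  have := ProbabilityTheory.variance_nonneg g ν
  rwa [ProbabilityTheory.variance_eq_sub hg, sub_nonneg] at this

lemma tVar_nonneg {α : Type*} [MeasurableSpace α] {μ : Measure α} [IsFiniteMeasure μ]
    {upd : α → ℝ → α}
    (hupd : MeasurePreserving (fun p : α × ℝ => upd p.1 p.2)
      (μ.prod (volume.restrict (Ioo 0 1))) μ)
    {f : α → ℝ} (hf : MemLp f 2 μ) :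
    0 ≤ tVar μ upd f := by
  set ν := volume.restrict (Ioo (0 : ℝ) 1)
  have hfT : MemLp (fun p : α × ℝ => f (upd p.1 p.2)) 2 (μ.prod ν) :=
    hf.comp_measurePreserving hupd
  have hsq : Integrable (fun p : α × ℝ => f (upd p.1 p.2) ^ 2) (μ.prod ν) := hfT.integrable_sq
  have hfiber : ∀ᵐ x ∂μ, cMean upd f x ^ 2 ≤ ∫ t, f (upd x t) ^ 2 ∂ν := by
    filter_upwards [(hfT.integrable one_le_two).prod_right_ae, hsq.prod_right_ae] with x h1 h2
    exact sq_integral_le_integral_sq ((memLp_two_iff_integrable_sq h1.aestronglyMeasurable).2 h2)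
  have hf2 : AEStronglyMeasurable (fun x => f x ^ 2)
      ((μ.prod ν).map fun p : α × ℝ => upd p.1 p.2) := by
    rw [hupd.map_eq]; exact hf.aestronglyMeasurable.pow 2
  refine sub_nonneg.2 ?_
  calc ∫ x, cMean upd f x ^ 2 ∂μ ≤ ∫ x, ∫ t, f (upd x t) ^ 2 ∂ν ∂μ :=
        integral_mono_of_nonneg (.of_forall fun _ => sq_nonneg _) hsq.integral_prod_left hfiber
    _ = ∫ p, f (upd p.1 p.2) ^ 2 ∂(μ.prod ν) := integral_integral hsq
    _ = intSq μ f := by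
      rw [← integral_map hupd.measurable.aemeasurable hf2, hupd.map_eq, intSq]

section Product

variable {α β : Type*} [MeasurableSpace α] [MeasurableSpace β] {μ : Measure α} {ν : Measure β}
  [SFinite μ] [SFinite ν] (f : α → ℝ) (h : β → ℝ)

lemma intSq_prod_mul : intSq (μ.prod ν) (fun p => f p.1 * h p.2) = intSq μ f * intSq ν h := by
  simp only [intSq, mul_pow]
  exact integral_prod_mul (fun x => f x ^ 2) fun y => h y ^ 2

lemma var'_prod_mul :
    var' (μ.prod ν) (fun p => f p.1 * h p.2) =
      intSq μ f * intSq ν h - (mval μ f * mval ν h) ^ 2 := by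
  rw [var', intSq_prod_mul, mval, mval, mval, integral_prod_mul]

lemma tVar_prod_mul (upd : α → ℝ → α) :
    tVar (μ.prod ν) (fun p t => (upd p.1 t, p.2)) (fun p => f p.1 * h p.2) =
      tVar μ upd f * intSq ν h := by
  have hcMean : ∀ p : α × β, cMean (fun p t => (upd p.1 t, p.2)) (fun p => f p.1 * h p.2) p =
      cMean upd f p.1 * h p.2 := fun p => integral_mul_const (h p.2) _
  simp only [tVar, intSq_prod_mul, hcMean, mul_pow, sub_mul]
  exact congrArg _ (integral_prod_mul (fun x => cMean upd f x ^ 2) fun y => h y ^ 2)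

end Product

lemma one_sub_sq_div_mul_div_le {F H f₀ h₀ t : ℝ} (hF : f₀ ^ 2 < F) (hH : h₀ ^ 2 < H)
    (ht : 0 ≤ t) :
    (1 - f₀ ^ 2 / F) * (t / (F - f₀ ^ 2)) ≤ t * H / (F * H - (f₀ * h₀) ^ 2) := by
  have hF0 : 0 < F := (sq_nonneg f₀).trans_lt hF
  have hH0 : 0 < H := (sq_nonneg h₀).trans_lt hH
  have hdenom : 0 < F * H - (f₀ * h₀) ^ 2 := by nlinarith [sq_nonneg f₀, sq_nonneg h₀]
  calc (1 - f₀ ^ 2 / F) * (t / (F - f₀ ^ 2)) = t * H / (F * H) := by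
        field_simp [(sub_pos.2 hF).ne']
    _ ≤ t * H / (F * H - (f₀ * h₀) ^ 2) :=
        div_le_div_of_nonneg_left (by positivity) hdenom (sub_le_self _ (sq_nonneg _))

theorem stmt2_general {n m : ℕ} (i : Fin n) (f : (Fin n → ℝ) → ℝ) (h : (Fin m → ℝ) → ℝ)
    (hf : MemLp f 2 (uCube n))
    (hvf : 0 < var' (uCube n) f) (hvh : 0 < var' (uCube m) h) :
    (1 - (mval (uCube n) f) ^ 2 / intSq (uCube n) f) * sobolT (uCube n) (updC i) f ≤
      sobolT ((uCube n).prod (uCube m)) (updF i) (fun p => f p.1 * h p.2) := by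
  have htVar : tVar ((uCube n).prod (uCube m)) (updF i) (fun p => f p.1 * h p.2) =
      tVar (uCube n) (updC i) f * intSq (uCube m) h := tVar_prod_mul f h (updC i)
  rw [sobolT, sobolT, htVar, var'_prod_mul, var']
  exact one_sub_sq_div_mul_div_le (sub_pos.1 hvf) (sub_pos.1 hvh)
    (tVar_nonneg (measurePreserving_update _ i) hf)

/-- Case 1 (lower bound): for `g(x,ξ) = f(x)·h(ξ)`,
`S^g_{T,x_i} ≥ (1 − f₀²/∫f²) · S^f_{T,x_i}`, a bound independent of `h`. -/
theorem stmt2 {n m : ℕ} (i : Fin n) (f : (Fin n → ℝ) → ℝ) (h : (Fin m → ℝ) → ℝ)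
    (hf : MemLp f 2 (uCube n)) (hh : MemLp h 2 (uCube m))
    (hvf : 0 < var' (uCube n) f) (hvh : 0 < var' (uCube m) h)
    (hif : 0 < intSq (uCube n) f) :
    (1 - (mval (uCube n) f) ^ 2 / intSq (uCube n) f) * sobolT (uCube n) (updC i) f ≤
      sobolT ((uCube n).prod (uCube m)) (updF i) (fun p => f p.1 * h p.2) :=
  stmt2_general i f h hf hvf hvh
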